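/- arXiv:1803.06773 — 2 statements merged into one kernel-verified Lean document; each statement's English description precedes it below -/
import Mathlib

section
/- Theorem 1 (sub-optimality bound of composed policy): Let π_Σ(a|s) ∝ exp(Q_Σ(s,a)) be the Boltzmann policy of Q_Σ = (Q1*+Q2*)/2, and let Q_C^{π_Σ} be the soft value of π_Σ under reward r_C = (r1+r2)/2. Then Q_C^{π_Σ}(s,a) ≥ Q_C*(s,a) − D*(s,a) for all s,a, where D* is the unique fixed point of D(s,a) ↦ γ Σ_{s'} p(s'|s,a) Σ_{a'} π_Σ(a'|s') [C*(s',a') + D(s',a')], and C* is the constant from Lemma 1. -/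
open Real Finset

lemma sum_exp_pos {A : Type} [Fintype A] [Nonempty A] (f : A → ℝ) :
    0 < ∑ a, Real.exp (f a) :=
  Finset.sum_pos (fun _ _ => Real.exp_pos _) Finset.univ_nonempty

lemma lse_le {A : Type} [Fintype A] [Nonempty A] (f g : A → ℝ) (c : ℝ)
    (h : ∀ a, f a ≤ g a + c) :
    Real.log (∑ a, Real.exp (f a)) ≤ Real.log (∑ a, Real.exp (g a)) + c := by
  have h1 : ∑ a, Real.exp (f a) ≤ Real.exp c * ∑ a, Real.exp (g a) := by
    rw [Finset.mul_sum]
    refine Finset.sum_le_sum fun a _ => ?_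
    rw [← Real.exp_add]
    exact Real.exp_le_exp.2 (by linarith [h a])
  calc Real.log (∑ a, Real.exp (f a)) ≤ Real.log (Real.exp c * ∑ a, Real.exp (g a)) :=
        Real.log_le_log (sum_exp_pos f) h1
    _ = Real.log (∑ a, Real.exp (g a)) + c := by
        rw [Real.log_mul (Real.exp_ne_zero c) (ne_of_gt (sum_exp_pos g)), Real.log_exp]; ring

lemma lse_avg {A : Type} [Fintype A] [Nonempty A] (f g : A → ℝ) :
    Real.log (∑ a, Real.exp ((f a + g a) / 2)) ≤
      (Real.log (∑ a, Real.exp (f a)) + Real.log (∑ a, Real.exp (g a))) / 2 := by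
  have cs : (∑ a, Real.exp ((f a + g a) / 2)) ^ 2 ≤
      (∑ a, Real.exp (f a)) * ∑ a, Real.exp (g a) := by
    refine Finset.sum_sq_le_sum_mul_sum_of_sq_eq_mul Finset.univ
      (fun a _ => (Real.exp_pos _).le) (fun a _ => (Real.exp_pos _).le) (fun a _ => ?_)
    rw [sq, ← Real.exp_add, ← Real.exp_add]; ring_nf
  have h2 : Real.log ((∑ a, Real.exp ((f a + g a) / 2)) ^ 2) ≤
      Real.log ((∑ a, Real.exp (f a)) * ∑ a, Real.exp (g a)) :=
    Real.log_le_log (pow_pos (sum_exp_pos _) 2) cs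
  rw [Real.log_pow, Real.log_mul (ne_of_gt (sum_exp_pos f)) (ne_of_gt (sum_exp_pos g))] at h2
  push_cast at h2
  linarith

lemma contraction_nonpos {ι : Type} [Fintype ι] [Nonempty ι] (γ : ℝ) (hγ1 : γ < 1)
    (g : ι → ℝ) (h : ∀ i, g i ≤ γ * Finset.univ.sup' Finset.univ_nonempty g) :
    ∀ i, g i ≤ 0 := by
  set M := Finset.univ.sup' Finset.univ_nonempty g with hM
  obtain ⟨q, -, hq⟩ := Finset.exists_mem_eq_sup' (Finset.univ_nonempty (α := ι)) g
  have hMle : M ≤ γ * M := by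
    have h2 := h q
    have : M = g q := hM.trans hq
    rw [← this] at h2; exact h2
  have hM0 : M ≤ 0 := by nlinarith
  intro i
  exact le_trans (Finset.le_sup' g (Finset.mem_univ i)) hM0

lemma sum_wt_le {S : Type} [Fintype S] (p : S → ℝ) (hp0 : ∀ s, 0 ≤ p s) (hp1 : ∑ s, p s = 1)
    (h : S → ℝ) (M : ℝ) (hM : ∀ s, h s ≤ M) : ∑ s, p s * h s ≤ M := by
  calc ∑ s, p s * h s ≤ ∑ s, p s * M :=
        Finset.sum_le_sum fun s _ => mul_le_mul_of_nonneg_left (hM s) (hp0 s)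
    _ = M := by rw [← Finset.sum_mul, hp1, one_mul]

lemma sqrt_exp (x : ℝ) : Real.sqrt (Real.exp x) = Real.exp (x / 2) := by
  rw [show Real.exp x = Real.exp (x / 2) * Real.exp (x / 2) by
    rw [← Real.exp_add]; ring_nf]
  exact Real.sqrt_mul_self (Real.exp_pos _).le

/-- Theorem 1: sub-optimality bound of the composed policy π_Σ. -/
theorem composed_policy_suboptimality
    {S A : Type} [Fintype S] [Fintype A] [Nonempty A]
    (γ : ℝ) (hγ0 : 0 ≤ γ) (hγ1 : γ < 1)
    (p : S → A → S → ℝ)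
    (hp0 : ∀ s a s', 0 ≤ p s a s')
    (hp1 : ∀ s a, ∑ s', p s a s' = 1)
    (r₁ r₂ : S → A → ℝ) (Q₁ Q₂ QC : S → A → ℝ)
    (hQ₁ : ∀ s a, Q₁ s a =
      r₁ s a + γ * ∑ s', p s a s' * Real.log (∑ a', Real.exp (Q₁ s' a')))
    (hQ₂ : ∀ s a, Q₂ s a =
      r₂ s a + γ * ∑ s', p s a s' * Real.log (∑ a', Real.exp (Q₂ s' a')))
    (hQC : ∀ s a, QC s a =
      (r₁ s a + r₂ s a) / 2 +
        γ * ∑ s', p s a s' * Real.log (∑ a', Real.exp (QC s' a')))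
    (π₁ π₂ πsum : S → A → ℝ)
    (hπ₁ : ∀ s a, π₁ s a = Real.exp (Q₁ s a) / ∑ a', Real.exp (Q₁ s a'))
    (hπ₂ : ∀ s a, π₂ s a = Real.exp (Q₂ s a) / ∑ a', Real.exp (Q₂ s a'))
    (hπsum : ∀ s a, πsum s a =
      Real.exp ((Q₁ s a + Q₂ s a) / 2) /
        ∑ a', Real.exp ((Q₁ s a' + Q₂ s a') / 2))
    (C : S → A → ℝ)
    (hC : ∀ s a, C s a =
      γ * ∑ s', p s a s' *
        ((1 / 2) * (-2 * Real.log (∑ a', Real.sqrt (π₁ s' a' * π₂ s' a'))) +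
          Finset.univ.sup' Finset.univ_nonempty (fun a' => C s' a')))
    (D : S → A → ℝ)
    (hD : ∀ s a, D s a =
      γ * ∑ s', p s a s' * ∑ a', πsum s' a' * (C s' a' + D s' a'))
    (Qπ : S → A → ℝ)
    (hQπ : ∀ s a, Qπ s a =
      (r₁ s a + r₂ s a) / 2 +
        γ * ∑ s', p s a s' *
          ∑ a', πsum s' a' * (Qπ s' a' - Real.log (πsum s' a'))) :
    ∀ s a, QC s a - D s a ≤ Qπ s a := by
  intro s₀ a₀
  haveI : Nonempty S := ⟨s₀⟩
  -- abbreviations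
  set V1 : S → ℝ := fun s => Real.log (∑ a, Real.exp (Q₁ s a)) with hV1
  set V2 : S → ℝ := fun s => Real.log (∑ a, Real.exp (Q₂ s a)) with hV2
  set Vm : S → ℝ := fun s => Real.log (∑ a, Real.exp ((Q₁ s a + Q₂ s a) / 2)) with hVm
  set VC : S → ℝ := fun s => Real.log (∑ a, Real.exp (QC s a)) with hVC
  set MC : S → ℝ := fun s => Finset.univ.sup' Finset.univ_nonempty (fun a' => C s a') with hMC
  -- δ identity
  have hδ : ∀ s : S, (1 : ℝ) / 2 * (-2 * Real.log (∑ a', Real.sqrt (π₁ s a' * π₂ s a'))) =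
      (V1 s + V2 s) / 2 - Vm s := by
    intro s
    have hsq : ∀ a : A, Real.sqrt (π₁ s a * π₂ s a) =
        Real.exp ((Q₁ s a + Q₂ s a) / 2) /
          Real.sqrt ((∑ a', Real.exp (Q₁ s a')) * ∑ a', Real.exp (Q₂ s a')) := by
      intro a
      rw [hπ₁, hπ₂, div_mul_div_comm,
        Real.sqrt_div (by positivity), ← Real.exp_add, sqrt_exp]
    have hden : (0 : ℝ) < Real.sqrt ((∑ a', Real.exp (Q₁ s a')) * ∑ a', Real.exp (Q₂ s a')) :=
      Real.sqrt_pos.2 (mul_pos (sum_exp_pos _) (sum_exp_pos _))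
    have hsum : ∑ a', Real.sqrt (π₁ s a' * π₂ s a') =
        (∑ a', Real.exp ((Q₁ s a' + Q₂ s a') / 2)) /
          Real.sqrt ((∑ a', Real.exp (Q₁ s a')) * ∑ a', Real.exp (Q₂ s a')) := by
      rw [Finset.sum_div]; exact Finset.sum_congr rfl fun a _ => hsq a
    rw [hsum, Real.log_div (ne_of_gt (sum_exp_pos _)) (ne_of_gt hden),
      Real.log_sqrt (mul_pos (sum_exp_pos _) (sum_exp_pos _)).le,
      Real.log_mul (ne_of_gt (sum_exp_pos _)) (ne_of_gt (sum_exp_pos _))]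
    simp only [hV1, hV2, hVm]
    ring
  -- QΣ Bellman equation
  have hQS : ∀ s a, (Q₁ s a + Q₂ s a) / 2 =
      (r₁ s a + r₂ s a) / 2 + γ * ∑ s', p s a s' * ((V1 s' + V2 s') / 2) := by
    intro s a
    have hc : ∑ s', p s a s' * ((V1 s' + V2 s') / 2) =
        (∑ s', p s a s' * V1 s' + ∑ s', p s a s' * V2 s') / 2 := by
      rw [← Finset.sum_add_distrib, Finset.sum_div]
      exact Finset.sum_congr rfl fun s' _ => by ring
    rw [hc]
    linear_combination (hQ₁ s a) / 2 + (hQ₂ s a) / 2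
  -- πsum facts
  have hπpos : ∀ s a, 0 < πsum s a := by
    intro s a; rw [hπsum]; exact div_pos (Real.exp_pos _) (sum_exp_pos _)
  have hπone : ∀ s : S, ∑ a, πsum s a = 1 := by
    intro s
    have : ∑ a, πsum s a = (∑ a, Real.exp ((Q₁ s a + Q₂ s a) / 2)) /
        ∑ a', Real.exp ((Q₁ s a' + Q₂ s a') / 2) := by
      rw [Finset.sum_div]; exact Finset.sum_congr rfl fun a _ => hπsum s a
    rw [this, div_self (ne_of_gt (sum_exp_pos _))]
  have hlogπ : ∀ s a, Real.log (πsum s a) = (Q₁ s a + Q₂ s a) / 2 - Vm s := by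
    intro s a
    rw [hπsum, Real.log_div (Real.exp_ne_zero _) (ne_of_gt (sum_exp_pos _)), Real.log_exp, hVm]
  -- Step (iii): QC ≤ QΣ
  have h3 : ∀ s a, QC s a - (Q₁ s a + Q₂ s a) / 2 ≤ 0 := by
    have := contraction_nonpos (ι := S × A) γ hγ1
      (fun q => QC q.1 q.2 - (Q₁ q.1 q.2 + Q₂ q.1 q.2) / 2) ?_
    · exact fun s a => this (s, a)
    intro i
    obtain ⟨s, a⟩ := i
    set M := Finset.univ.sup' Finset.univ_nonempty
      (fun q : S × A => QC q.1 q.2 - (Q₁ q.1 q.2 + Q₂ q.1 q.2) / 2) with hM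
    have e3 : QC s a - (Q₁ s a + Q₂ s a) / 2 =
        γ * ∑ s', p s a s' * (VC s' - (V1 s' + V2 s') / 2) := by
      have hc : ∑ s', p s a s' * (VC s' - (V1 s' + V2 s') / 2) =
          ∑ s', p s a s' * VC s' - ∑ s', p s a s' * ((V1 s' + V2 s') / 2) := by
        rw [← Finset.sum_sub_distrib]
        exact Finset.sum_congr rfl fun s' _ => by ring
      rw [hc]
      linear_combination hQC s a - hQS s a
    show QC s a - (Q₁ s a + Q₂ s a) / 2 ≤ γ * M
    rw [e3]
    refine mul_le_mul_of_nonneg_left ?_ hγ0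
    refine sum_wt_le _ (hp0 s a) (hp1 s a) _ M fun s' => ?_
    have havg := lse_avg (Q₁ s') (Q₂ s')
    have hub : Real.log (∑ a', Real.exp (QC s' a')) ≤
        Real.log (∑ a', Real.exp ((Q₁ s' a' + Q₂ s' a') / 2)) + M := by
      refine lse_le _ _ M fun a' => ?_
      have hle := Finset.le_sup' (fun q : S × A => QC q.1 q.2 - (Q₁ q.1 q.2 + Q₂ q.1 q.2) / 2)
        (Finset.mem_univ (s', a'))
      rw [← hM] at hle
      simp only at hle
      linarith
    simp only [hV1, hV2, hVm, hVC]
    linarith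
  -- Step (iv): QΣ - QC ≤ C
  have h4 : ∀ s a, (Q₁ s a + Q₂ s a) / 2 - QC s a - C s a ≤ 0 := by
    have key := contraction_nonpos (ι := S × A) γ hγ1
      (fun q => (Q₁ q.1 q.2 + Q₂ q.1 q.2) / 2 - QC q.1 q.2 - C q.1 q.2) ?_
    · exact fun s a => key (s, a)
    intro i
    obtain ⟨s, a⟩ := i
    set N := Finset.univ.sup' Finset.univ_nonempty
      (fun q : S × A => (Q₁ q.1 q.2 + Q₂ q.1 q.2) / 2 - QC q.1 q.2 - C q.1 q.2) with hN
    have e4 : (Q₁ s a + Q₂ s a) / 2 - QC s a - C s a =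
        γ * ∑ s', p s a s' * (Vm s' - VC s' - MC s') := by
      have hc : ∑ s', p s a s' * (Vm s' - VC s' - MC s') =
          ∑ s', p s a s' * ((V1 s' + V2 s') / 2) - ∑ s', p s a s' * VC s' -
            ∑ s', p s a s' *
              ((1 : ℝ) / 2 * (-2 * Real.log (∑ a', Real.sqrt (π₁ s' a' * π₂ s' a'))) + MC s') := by
        rw [← Finset.sum_sub_distrib, ← Finset.sum_sub_distrib]
        refine Finset.sum_congr rfl fun s' _ => ?_
        have := hδ s'
        ring_nf
        nlinarith [hδ s', hp0 s a s']
      rw [hc]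
      have hCsa := hC s a
      linear_combination hQS s a - hQC s a - hCsa
    show (Q₁ s a + Q₂ s a) / 2 - QC s a - C s a ≤ γ * N
    rw [e4]
    refine mul_le_mul_of_nonneg_left ?_ hγ0
    refine sum_wt_le _ (hp0 s a) (hp1 s a) _ N fun s' => ?_
    -- Vm s' ≤ VC s' + (MC s' + N)
    have hub : Real.log (∑ a', Real.exp ((Q₁ s' a' + Q₂ s' a') / 2)) ≤
        Real.log (∑ a', Real.exp (QC s' a')) + (MC s' + N) := by
      refine lse_le _ _ _ fun a' => ?_
      have h1 := Finset.le_sup' (fun q : S × A =>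
        (Q₁ q.1 q.2 + Q₂ q.1 q.2) / 2 - QC q.1 q.2 - C q.1 q.2) (Finset.mem_univ (s', a'))
      rw [← hN] at h1
      simp only at h1
      have h2 : C s' a' ≤ MC s' := by
        rw [hMC]
        exact Finset.le_sup' (fun a'' => C s' a'') (Finset.mem_univ a')
      linarith
    simp only [hVm, hVC]
    linarith
  -- Step (v): QC - D - Qπ ≤ 0
  have h5 : ∀ s a, QC s a - D s a - Qπ s a ≤ 0 := by
    have key := contraction_nonpos (ι := S × A) γ hγ1
      (fun q => QC q.1 q.2 - D q.1 q.2 - Qπ q.1 q.2) ?_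
    · exact fun s a => key (s, a)
    intro i
    obtain ⟨s, a⟩ := i
    set K := Finset.univ.sup' Finset.univ_nonempty
      (fun q : S × A => QC q.1 q.2 - D q.1 q.2 - Qπ q.1 q.2) with hK
    -- rewrite Qπ using log πsum
    have hQπ' : ∀ s a, Qπ s a = (r₁ s a + r₂ s a) / 2 +
        γ * ∑ s', p s a s' *
          ((∑ a', πsum s' a' * (Qπ s' a' - (Q₁ s' a' + Q₂ s' a') / 2)) + Vm s') := by
      intro s a
      rw [hQπ s a]
      congr 1
      congr 1
      refine Finset.sum_congr rfl fun s' _ => ?_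
      congr 1
      have : ∑ a', πsum s' a' * (Qπ s' a' - Real.log (πsum s' a')) =
          ∑ a', (πsum s' a' * (Qπ s' a' - (Q₁ s' a' + Q₂ s' a') / 2) + πsum s' a' * Vm s') := by
        refine Finset.sum_congr rfl fun a' _ => ?_
        rw [hlogπ s' a']
        ring
      rw [this, Finset.sum_add_distrib, ← Finset.sum_mul, hπone s', one_mul]
    have e5 : QC s a - D s a - Qπ s a =
        γ * ∑ s', p s a s' *
          (VC s' - Vm s' +
            ∑ a', πsum s' a' *
              (((Q₁ s' a' + Q₂ s' a') / 2 - QC s' a' - C s' a') +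
                (QC s' a' - D s' a' - Qπ s' a'))) := by
      have hc : ∀ s', (VC s' - Vm s' +
            ∑ a', πsum s' a' *
              (((Q₁ s' a' + Q₂ s' a') / 2 - QC s' a' - C s' a') +
                (QC s' a' - D s' a' - Qπ s' a'))) =
          VC s' - ((∑ a', πsum s' a' * (Qπ s' a' - (Q₁ s' a' + Q₂ s' a') / 2)) + Vm s') -
            ∑ a', πsum s' a' * (C s' a' + D s' a') := by
        intro s'
        have : ∑ a', πsum s' a' *
              (((Q₁ s' a' + Q₂ s' a') / 2 - QC s' a' - C s' a') +
                (QC s' a' - D s' a' - Qπ s' a')) =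
            ∑ a', (- (πsum s' a' * (Qπ s' a' - (Q₁ s' a' + Q₂ s' a') / 2)) -
              πsum s' a' * (C s' a' + D s' a')) := by
          refine Finset.sum_congr rfl fun a' _ => ?_
          ring
        rw [this, Finset.sum_sub_distrib, Finset.sum_neg_distrib]
        ring
      have hsplit : ∑ s', p s a s' *
          (VC s' - Vm s' +
            ∑ a', πsum s' a' *
              (((Q₁ s' a' + Q₂ s' a') / 2 - QC s' a' - C s' a') +
                (QC s' a' - D s' a' - Qπ s' a'))) =
          ∑ s', p s a s' * VC s' -
            ∑ s', p s a s' * ((∑ a', πsum s' a' * (Qπ s' a' - (Q₁ s' a' + Q₂ s' a') / 2)) + Vm s') -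
            ∑ s', p s a s' * ∑ a', πsum s' a' * (C s' a' + D s' a') := by
        rw [← Finset.sum_sub_distrib, ← Finset.sum_sub_distrib]
        refine Finset.sum_congr rfl fun s' _ => ?_
        rw [hc s']
        ring
      rw [hsplit]
      linear_combination hQC s a - hD s a - hQπ' s a
    show QC s a - D s a - Qπ s a ≤ γ * K
    rw [e5]
    refine mul_le_mul_of_nonneg_left ?_ hγ0
    refine sum_wt_le _ (hp0 s a) (hp1 s a) _ K fun s' => ?_
    have hVle : Real.log (∑ a', Real.exp (QC s' a')) ≤
        Real.log (∑ a', Real.exp ((Q₁ s' a' + Q₂ s' a') / 2)) + 0 := by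
      refine lse_le _ _ 0 fun a' => ?_
      have := h3 s' a'
      linarith
    have hinner : ∑ a', πsum s' a' *
        (((Q₁ s' a' + Q₂ s' a') / 2 - QC s' a' - C s' a') +
          (QC s' a' - D s' a' - Qπ s' a')) ≤ K := by
      refine sum_wt_le _ (fun a' => (hπpos s' a').le) (hπone s') _ K fun a' => ?_
      have h1 := h4 s' a'
      have h2 := Finset.le_sup' (fun q : S × A => QC q.1 q.2 - D q.1 q.2 - Qπ q.1 q.2)
        (Finset.mem_univ (s', a'))
      rw [← hK] at h2
      simp only at h2
      linarith
    simp only [hVm, hVC]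
    linarith
  have := h5 s₀ a₀
  linarith
end

section
/- If the Boltzmann policies of Q1* and Q2* coincide at every state (π1*(·|s) = π2*(·|s) for all s), then the composed bound of Lemma 1 is tight from below up to zero gap: C* = 0 and hence the optimal soft Q-function for r_C = (r1+r2)/2 equals Q_Σ = (Q1*+Q2*)/2. -/
/-!
Both the soft Bellman operator `Q ↦ r + γ P (log ∑ exp Q)` and the `C`-recursion
`C ↦ γ P (max C)` are `γ`-contractions in the sup norm, because log-sum-exp and max are
monotone and commute with adding a constant, hence 1-Lipschitz. So each has at most one
fixed point. Equal Boltzmann policies make the Bhattacharyya term `log ∑ √(π₁ π₂)` vanish,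
so `0` is a fixed point of the `C`-recursion. They also force `Q₂ s = Q₁ s + c s` for a
constant `c s`, along which log-sum-exp is affine; hence `(Q₁ + Q₂) / 2` is a fixed point of
the soft Bellman operator for `(r₁ + r₂) / 2`.
-/

open Finset Function Real

section SupNormLipschitz

variable {A : Type} [Fintype A]

theorem lipschitzWith_one_of_monotone_of_map_add_const {V : (A → ℝ) → ℝ} (hmono : Monotone V)
    (hshift : ∀ q c, V (fun a => q a + c) = V q + c) : LipschitzWith 1 V := by
  have key : ∀ q q', V q ≤ V q' + dist q q' := fun q q' => by
    rw [← hshift]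
    exact hmono fun a => by
      linarith [(abs_le.1 ((Real.dist_eq _ _).symm.trans_le (dist_le_pi_dist q q' a))).2]
  refine LipschitzWith.of_dist_le_mul fun q q' => ?_
  rw [NNReal.coe_one, one_mul, Real.dist_eq, abs_le]
  constructor <;> linarith [key q q', key q' q, dist_comm q q']

theorem lipschitzWith_one_sup' [Nonempty A] :
    LipschitzWith 1 fun q : A → ℝ => univ.sup' univ_nonempty q :=
  lipschitzWith_one_of_monotone_of_map_add_const (fun _ _ h => sup'_mono_fun fun a _ => h a)
    fun q c => (sup'_add _ q c _).symm

end SupNormLipschitz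

section LogSumExp

variable {A : Type} [Fintype A] [Nonempty A]

noncomputable def logSumExp (q : A → ℝ) : ℝ := log (∑ a, exp (q a))

theorem sum_exp_pos_s18 (q : A → ℝ) : 0 < ∑ a, exp (q a) :=
  sum_pos (fun _ _ => exp_pos _) univ_nonempty

theorem logSumExp_add_const (q : A → ℝ) (c : ℝ) :
    logSumExp (fun a => q a + c) = logSumExp q + c := by
  simp only [logSumExp, exp_add, ← sum_mul]
  rw [log_mul (sum_exp_pos_s18 q).ne' (exp_ne_zero c), log_exp]

theorem logSumExp_mono : Monotone (logSumExp (A := A)) := fun q _ h =>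
  log_le_log (sum_exp_pos_s18 q) (sum_le_sum fun a _ => exp_le_exp.2 (h a))

theorem lipschitzWith_one_logSumExp : LipschitzWith 1 (logSumExp (A := A)) :=
  lipschitzWith_one_of_monotone_of_map_add_const logSumExp_mono logSumExp_add_const

theorem sum_exp_div_sum_exp (q : A → ℝ) : ∑ a, exp (q a) / ∑ a', exp (q a') = 1 := by
  rw [← sum_div, div_self (sum_exp_pos_s18 q).ne']

theorem log_exp_div_sum_exp (q : A → ℝ) (a : A) :
    log (exp (q a) / ∑ a', exp (q a')) = q a - logSumExp q := by
  rw [log_div (exp_ne_zero _) (sum_exp_pos_s18 q).ne', log_exp, logSumExp]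

theorem logSumExp_midpoint_of_exp_div_eq {q₁ q₂ : A → ℝ}
    (h : ∀ a, exp (q₁ a) / ∑ a', exp (q₁ a') = exp (q₂ a) / ∑ a', exp (q₂ a')) :
    logSumExp (fun a => (q₁ a + q₂ a) / 2) = (logSumExp q₁ + logSumExp q₂) / 2 := by
  have hshift : (fun a => (q₁ a + q₂ a) / 2)
      = fun a => q₁ a + (logSumExp q₂ - logSumExp q₁) / 2 := funext fun a => by
    have := congrArg log (h a)
    rw [log_exp_div_sum_exp, log_exp_div_sum_exp] at this
    linarith
  rw [hshift, logSumExp_add_const]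
  ring

end LogSumExp

section Bellman

variable {S A : Type} [Fintype S] [Fintype A]

def bellman (γ : ℝ) (p : S → A → S → ℝ) (r : S → A → ℝ) (V : (A → ℝ) → ℝ)
    (Q : S → A → ℝ) : S → A → ℝ :=
  fun s a => r s a + γ * ∑ s', p s a s' * V (Q s')

theorem abs_sum_mul_le_of_sum_eq_one {w x : S → ℝ} (hw0 : ∀ s, 0 ≤ w s) (hw1 : ∑ s, w s = 1)
    {N : ℝ} (hx : ∀ s, |x s| ≤ N) : |∑ s, w s * x s| ≤ N :=
  calc |∑ s, w s * x s| ≤ ∑ s, w s * |x s| := by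
        refine (abs_sum_le_sum_abs _ _).trans_eq (sum_congr rfl fun s _ => ?_)
        rw [abs_mul, abs_of_nonneg (hw0 s)]
    _ ≤ ∑ s, w s * N := sum_le_sum fun s _ => mul_le_mul_of_nonneg_left (hx s) (hw0 s)
    _ = N := by rw [← sum_mul, hw1, one_mul]

theorem lipschitzWith_bellman {γ : ℝ} (hγ0 : 0 ≤ γ) {p : S → A → S → ℝ}
    (hp0 : ∀ s a s', 0 ≤ p s a s') (hp1 : ∀ s a, ∑ s', p s a s' = 1) (r : S → A → ℝ)
    {V : (A → ℝ) → ℝ} (hV : LipschitzWith 1 V) :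
    LipschitzWith ⟨γ, hγ0⟩ (bellman γ p r V) := by
  refine LipschitzWith.of_dist_le_mul fun Q Q' => ?_
  refine (dist_pi_le_iff (by positivity)).2 fun s => (dist_pi_le_iff (by positivity)).2 fun a => ?_
  have hdiff : bellman γ p r V Q s a - bellman γ p r V Q' s a
      = γ * ∑ s', p s a s' * (V (Q s') - V (Q' s')) := by
    simp only [bellman, mul_sub, sum_sub_distrib]
    ring
  rw [Real.dist_eq, hdiff, abs_mul, abs_of_nonneg hγ0]
  refine mul_le_mul_of_nonneg_left (abs_sum_mul_le_of_sum_eq_one (hp0 s a) (hp1 s a) fun s' => ?_) hγ0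
  rw [← Real.dist_eq]
  calc dist (V (Q s')) (V (Q' s')) ≤ dist (Q s') (Q' s') := by simpa using hV.dist_le_mul _ _
    _ ≤ dist Q Q' := dist_le_pi_dist Q Q' s'

theorem bellman_fixedPt_unique {γ : ℝ} (hγ0 : 0 ≤ γ) (hγ1 : γ < 1) {p : S → A → S → ℝ}
    (hp0 : ∀ s a s', 0 ≤ p s a s') (hp1 : ∀ s a, ∑ s', p s a s' = 1) (r : S → A → ℝ)
    {V : (A → ℝ) → ℝ} (hV : LipschitzWith 1 V) {Q Q' : S → A → ℝ}
    (hQ : IsFixedPt (bellman γ p r V) Q) (hQ' : IsFixedPt (bellman γ p r V) Q') : Q = Q' :=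
  ContractingWith.fixedPoint_unique' ⟨hγ1, lipschitzWith_bellman hγ0 hp0 hp1 r hV⟩ hQ hQ'

end Bellman

/-- If the Boltzmann policies of Q₁* and Q₂* coincide at every state, then C* = 0
and the optimal soft Q-function of the averaged reward equals (Q₁*+Q₂*)/2. -/
theorem composed_Q_tight_when_policies_agree
    {S A : Type} [Fintype S] [Fintype A] [Nonempty A]
    (γ : ℝ) (hγ0 : 0 ≤ γ) (hγ1 : γ < 1)
    (p : S → A → S → ℝ)
    (hp0 : ∀ s a s', 0 ≤ p s a s')
    (hp1 : ∀ s a, ∑ s', p s a s' = 1)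
    (r₁ r₂ : S → A → ℝ) (Q₁ Q₂ QC : S → A → ℝ)
    (hQ₁ : ∀ s a, Q₁ s a =
      r₁ s a + γ * ∑ s', p s a s' * Real.log (∑ a', Real.exp (Q₁ s' a')))
    (hQ₂ : ∀ s a, Q₂ s a =
      r₂ s a + γ * ∑ s', p s a s' * Real.log (∑ a', Real.exp (Q₂ s' a')))
    (hQC : ∀ s a, QC s a =
      (r₁ s a + r₂ s a) / 2 +
        γ * ∑ s', p s a s' * Real.log (∑ a', Real.exp (QC s' a')))
    (π₁ π₂ : S → A → ℝ)
    (hπ₁ : ∀ s a, π₁ s a = Real.exp (Q₁ s a) / ∑ a', Real.exp (Q₁ s a'))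
    (hπ₂ : ∀ s a, π₂ s a = Real.exp (Q₂ s a) / ∑ a', Real.exp (Q₂ s a'))
    (hagree : ∀ s a, π₁ s a = π₂ s a)
    (C : S → A → ℝ)
    (hC : ∀ s a, C s a =
      γ * ∑ s', p s a s' *
        ((1 / 2) * (-2 * Real.log (∑ a', Real.sqrt (π₁ s' a' * π₂ s' a'))) +
          Finset.univ.sup' Finset.univ_nonempty (fun a' => C s' a'))) :
    (∀ s a, C s a = 0) ∧ (∀ s a, QC s a = (Q₁ s a + Q₂ s a) / 2) := by
  have hboltz : ∀ s a, exp (Q₁ s a) / ∑ a', exp (Q₁ s a') = exp (Q₂ s a) / ∑ a', exp (Q₂ s a') :=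
    fun s a => by rw [← hπ₁, ← hπ₂, hagree]
  have hbhatt : ∀ s, log (∑ a, sqrt (π₁ s a * π₂ s a)) = 0 := fun s => by
    have hπ₁0 : ∀ a, 0 ≤ π₁ s a := fun a => hπ₁ s a ▸ div_nonneg (exp_pos _).le (sum_exp_pos_s18 _).le
    calc log (∑ a, sqrt (π₁ s a * π₂ s a)) = log (∑ a, π₁ s a) := by
          simp only [← hagree s, sqrt_mul_self (hπ₁0 _)]
      _ = 0 := by simp only [hπ₁, sum_exp_div_sum_exp, log_one]
  have hCfix : IsFixedPt (bellman γ p 0 fun q => univ.sup' univ_nonempty q) C :=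
    funext₂ fun s a => by simp [bellman, hC s a, hbhatt]
  have h0fix : IsFixedPt (bellman γ p 0 fun q => univ.sup' univ_nonempty q) 0 :=
    funext₂ fun s a => by simp [bellman]
  have hQCfix : IsFixedPt (bellman γ p (fun s a => (r₁ s a + r₂ s a) / 2) logSumExp) QC :=
    funext₂ fun s a => (hQC s a).symm
  have hmidfix : IsFixedPt (bellman γ p (fun s a => (r₁ s a + r₂ s a) / 2) logSumExp)
      fun s a => (Q₁ s a + Q₂ s a) / 2 := funext₂ fun s a => by
    simp only [bellman, logSumExp_midpoint_of_exp_div_eq (hboltz _)]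
    rw [hQ₁ s a, hQ₂ s a]
    simp only [logSumExp, mul_add, sum_add_distrib, add_div, sum_div, mul_div_assoc]
    ring
  have hC0 := bellman_fixedPt_unique hγ0 hγ1 hp0 hp1 0 lipschitzWith_one_sup' hCfix h0fix
  have hQCmid :=
    bellman_fixedPt_unique hγ0 hγ1 hp0 hp1 _ lipschitzWith_one_logSumExp hQCfix hmidfix
  exact ⟨fun s a => congrFun₂ hC0 s a, fun s a => congrFun₂ hQCmid s a⟩
end
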